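/- arXiv:1707.09662 — 5 statements merged into one kernel-verified Lean document; each statement's English description precedes it below -/
import Mathlib

section
/- Let K ≥ 1 and let t be a real number with 0 < t < K that is not an integer. Define x_s = (⌈t⌉ − t)/binom(K,⌊t⌋) for s = ⌊t⌋, x_s = (t − ⌊t⌋)/binom(K,⌈t⌉) for s = ⌈t⌉, and x_s = 0 otherwise. Then ∑_{s=0}^{K} binom(K,s)·x_s = 1 and ∑_{s=1}^{K} binom(K-1,s-1)·x_s = t/K. -/
open Finset

/-!
Write `n = ⌊t⌋` and `θ = t - n ∈ (0, 1)`, so that `⌈t⌉ = n + 1`. Then `x` spreads mass `1 - θ`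
evenly over the `binom(K, n)` subsets of size `n` and mass `θ` over the `binom(K, n + 1)` subsets
of size `n + 1`, and the partition sum is `(1 - θ) + θ = 1`. Since
`binom(K - 1, s - 1) = (s / K) binom(K, s)`, the storage sum is the mean subset size over `K`,
namely `(n (1 - θ) + (n + 1) θ) / K = t / K`.
-/

lemma sum_mul_ite_ite_eq {ι M : Type*} [DecidableEq ι] [NonUnitalNonAssocSemiring M]
    {s : Finset ι} {i j : ι} (hij : i ≠ j) (hi : i ∈ s) (hj : j ∈ s) (w : ι → M) (a b : M) :
    ∑ k ∈ s, w k * (if k = i then a else if k = j then b else 0) = w i * a + w j * b := by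
  rw [sum_eq_add_of_mem i j hi hj hij]
  · simp [hij.symm]
  · rintro k - ⟨hki, hkj⟩
    simp [hki, hkj]

lemma sum_Icc_choose_pred_mul {𝕜 : Type*} [Field 𝕜] [CharZero 𝕜] (K : ℕ) (y : ℕ → 𝕜) :
    ∑ s ∈ Icc 1 K, ((K - 1).choose (s - 1) : 𝕜) * y s =
      ∑ s ∈ range (K + 1), (s / K * K.choose s : 𝕜) * y s := by
  rcases K with _ | m
  · simp
  rw [sum_range_succ', ← Ico_add_one_right_eq_Icc, sum_Ico_eq_sum_range]
  simp only [Nat.cast_zero, zero_div, zero_mul, add_zero]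
  refine sum_congr rfl fun s _ => ?_
  have h : ((m + 1) * m.choose s : 𝕜) = (m + 1).choose (s + 1) * (s + 1) := by
    exact_mod_cast Nat.add_one_mul_choose_eq m s
  rw [add_comm 1 s, Nat.add_sub_cancel, Nat.add_sub_cancel]
  push_cast
  field_simp
  linear_combination y (s + 1) * h

theorem centralized_placement_feasible_noninteger_general (K : ℕ)
    (t : ℝ) (ht0 : 0 < t) (htK : t < K) (hnotint : ¬ ∃ n : ℤ, t = (n : ℝ))
    (x : ℕ → ℝ)
    (hx : ∀ s : ℕ, x s =
      if (s : ℤ) = ⌊t⌋ then ((⌈t⌉ : ℝ) - t) / (K.choose ⌊t⌋.toNat : ℝ)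
      else if (s : ℤ) = ⌈t⌉ then (t - (⌊t⌋ : ℝ)) / (K.choose ⌈t⌉.toNat : ℝ)
      else 0) :
    (∑ s ∈ range (K + 1), (K.choose s : ℝ) * x s = 1) ∧
    (∑ s ∈ Icc 1 K, ((K - 1).choose (s - 1) : ℝ) * x s = t / K) := by
  set n := ⌊t⌋₊
  have hfloor : ⌊t⌋ = n := (Int.natCast_floor_eq_floor ht0.le).symm
  have hceil : ⌈t⌉ = (n + 1 : ℕ) := by
    rw [Nat.cast_succ, ← hfloor, Int.ceil_eq_floor_add_one_iff_notMem]
    exact fun ⟨m, hm⟩ => hnotint ⟨m, hm.symm⟩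
  have hnK : n < K := (Nat.floor_lt ht0.le).2 htK
  have hCn : (K.choose n : ℝ) ≠ 0 := Nat.cast_ne_zero.2 (Nat.choose_pos hnK.le).ne'
  have hCn1 : (K.choose (n + 1) : ℝ) ≠ 0 := Nat.cast_ne_zero.2 (Nat.choose_pos hnK).ne'
  have hK : (K : ℝ) ≠ 0 := Nat.cast_ne_zero.2 (by omega)
  simp only [hfloor, hceil, Nat.cast_inj, Int.toNat_natCast, Int.cast_natCast] at hx
  rw [funext hx, sum_Icc_choose_pred_mul,
    sum_mul_ite_ite_eq n.succ_ne_self.symm (mem_range.2 (by omega)) (mem_range.2 (by omega)),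
    sum_mul_ite_ite_eq n.succ_ne_self.symm (mem_range.2 (by omega)) (mem_range.2 (by omega))]
  push_cast
  constructor
  · field_simp
    ring
  · field_simp
    ring

/-- Feasibility of the generalized centralized placement (non-integer `t`). -/
theorem centralized_placement_feasible_noninteger (K : ℕ) (hK : 1 ≤ K)
    (t : ℝ) (ht0 : 0 < t) (htK : t < K) (hnotint : ¬ ∃ n : ℤ, t = (n : ℝ))
    (x : ℕ → ℝ)
    (hx : ∀ s : ℕ, x s =
      if (s : ℤ) = ⌊t⌋ then ((⌈t⌉ : ℝ) - t) / (K.choose ⌊t⌋.toNat : ℝ)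
      else if (s : ℤ) = ⌈t⌉ then (t - (⌊t⌋ : ℝ)) / (K.choose ⌈t⌉.toNat : ℝ)
      else 0) :
    (∑ s ∈ range (K + 1), (K.choose s : ℝ) * x s = 1) ∧
    (∑ s ∈ Icc 1 K, ((K - 1).choose (s - 1) : ℝ) * x s = t / K) :=
  centralized_placement_feasible_noninteger_general K t ht0 htK hnotint x hx
end

section
/- Let K, N, M, s be positive reals/integers with t = KM/N and suppose 0 ≤ s1 ≤ t ≤ s2 ≤ K are integers with s1 ≠ s2. Then the function f(s1, s2) = K − (K+1)·(KM/N + s1·s2)/((s1+1)(s2+1)) is nonincreasing in s1 on {s1 : s1 ≤ t} and nondecreasing in s2 on {s2 : s2 ≥ t}. Consequently f is minimized over integer pairs with s1 ≤ t ≤ s2 at s1 = ⌊t⌋, s2 = ⌈t⌉. -/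
/-- Monotonicity of the two-level rate `f(s1,s2) = K - (K+1)(t + s1 s2)/((s1+1)(s2+1))`
on the feasible region `s1 ≤ t ≤ s2`, and minimality at `(⌊t⌋, ⌈t⌉)`. -/
theorem two_level_rate_monotone (K : ℕ) (hK : 1 ≤ K)
    (t : ℝ) (ht0 : 0 ≤ t) (htK : t ≤ K) :
    let f : ℤ → ℤ → ℝ := fun s1 s2 =>
      (K : ℝ) - (K + 1) * (t + (s1 : ℝ) * (s2 : ℝ)) / (((s1 : ℝ) + 1) * ((s2 : ℝ) + 1))
    (∀ s1 s1' s2 : ℤ, 0 ≤ s1 → s1 ≤ s1' → (s1' : ℝ) ≤ t → t ≤ (s2 : ℝ) → (s2 : ℝ) ≤ K →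
        f s1' s2 ≤ f s1 s2) ∧
    (∀ s1 s2 s2' : ℤ, 0 ≤ s1 → (s1 : ℝ) ≤ t → t ≤ (s2 : ℝ) → s2 ≤ s2' → (s2' : ℝ) ≤ K →
        f s1 s2 ≤ f s1 s2') ∧
    (∀ s1 s2 : ℤ, 0 ≤ s1 → (s1 : ℝ) ≤ t → t ≤ (s2 : ℝ) → (s2 : ℝ) ≤ K →
        f ⌊t⌋ ⌈t⌉ ≤ f s1 s2) := by
  intro f
  have hK1 : (0 : ℝ) < (K : ℝ) + 1 := by positivity
  have mono1 : ∀ s1 s1' s2 : ℤ, 0 ≤ s1 → s1 ≤ s1' → (s1' : ℝ) ≤ t → t ≤ (s2 : ℝ) →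
      (s2 : ℝ) ≤ K → f s1' s2 ≤ f s1 s2 := by
    intro s1 s1' s2 h0 h12 h1t hts h2K
    have h0' : (0 : ℝ) ≤ (s1 : ℝ) := by exact_mod_cast h0
    have h12' : (s1 : ℝ) ≤ (s1' : ℝ) := by exact_mod_cast h12
    have hd1 : (0 : ℝ) < ((s1 : ℝ) + 1) * ((s2 : ℝ) + 1) := by nlinarith
    have hd2 : (0 : ℝ) < ((s1' : ℝ) + 1) * ((s2 : ℝ) + 1) := by nlinarith
    simp only [f]
    apply sub_le_sub_left
    rw [div_le_div_iff₀ hd1 hd2]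
    nlinarith [mul_nonneg (mul_nonneg hK1.le (by nlinarith : (0:ℝ) ≤ (s2:ℝ) + 1))
      (mul_nonneg (by linarith : (0:ℝ) ≤ (s1':ℝ) - (s1:ℝ)) (by linarith : (0:ℝ) ≤ (s2:ℝ) - t))]
  have mono2 : ∀ s1 s2 s2' : ℤ, 0 ≤ s1 → (s1 : ℝ) ≤ t → t ≤ (s2 : ℝ) → s2 ≤ s2' →
      (s2' : ℝ) ≤ K → f s1 s2 ≤ f s1 s2' := by
    intro s1 s2 s2' h0 h1t hts h22 h2K
    have h0' : (0 : ℝ) ≤ (s1 : ℝ) := by exact_mod_cast h0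
    have h22' : (s2 : ℝ) ≤ (s2' : ℝ) := by exact_mod_cast h22
    have hd1 : (0 : ℝ) < ((s1 : ℝ) + 1) * ((s2 : ℝ) + 1) := by nlinarith
    have hd2 : (0 : ℝ) < ((s1 : ℝ) + 1) * ((s2' : ℝ) + 1) := by nlinarith
    simp only [f]
    apply sub_le_sub_left
    rw [div_le_div_iff₀ hd2 hd1]
    nlinarith [mul_nonneg (mul_nonneg hK1.le (by nlinarith : (0:ℝ) ≤ (s1:ℝ) + 1))
      (mul_nonneg (by linarith : (0:ℝ) ≤ (s2':ℝ) - (s2:ℝ)) (by linarith : (0:ℝ) ≤ t - (s1:ℝ)))]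
  refine ⟨mono1, mono2, ?_⟩
  intro s1 s2 h0 h1t hts h2K
  have hfl0 : (0 : ℤ) ≤ ⌊t⌋ := Int.le_floor.mpr (by exact_mod_cast ht0)
  have hfl : (⌊t⌋ : ℝ) ≤ t := Int.floor_le t
  have hceil : t ≤ (⌈t⌉ : ℝ) := Int.le_ceil t
  have hceilK : ((⌈t⌉ : ℤ) : ℝ) ≤ K := by
    have : ⌈t⌉ ≤ (K : ℤ) := Int.ceil_le.mpr (by exact_mod_cast htK)
    exact_mod_cast this
  have hs1fl : s1 ≤ ⌊t⌋ := Int.le_floor.mpr h1t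
  have hcs2 : ⌈t⌉ ≤ s2 := Int.ceil_le.mpr hts
  calc f ⌊t⌋ ⌈t⌉ ≤ f s1 ⌈t⌉ := mono1 s1 ⌊t⌋ ⌈t⌉ h0 hs1fl hfl hceil hceilK
    _ ≤ f s1 s2 := mono2 s1 ⌈t⌉ s2 h0 h1t hceil hcs2 h2K
end

section
/- Let x_{s1}, x_{s2} ≥ 0 solve binom(K,s1)x_{s1} + binom(K,s2)x_{s2} = 1 and binom(K−1,s1−1)x_{s1} + binom(K−1,s2−1)x_{s2} = t/K for integers 1 ≤ s1 < s2 ≤ K and real t with 0 < t < K. Then the objective binom(K,s1+1)x_{s1} + binom(K,s2+1)x_{s2} equals K − (K+1)·(t + s1·s2)/((s1+1)(s2+1)). -/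
lemma choose_succ_real (K s : ℕ) (hsK : s ≤ K) :
    ((K.choose (s + 1)) : ℝ) * ((s : ℝ) + 1) = (K.choose s : ℝ) * ((K : ℝ) - s) := by
  have := Nat.choose_succ_right_eq K s
  have : ((K.choose (s + 1) * (s + 1) : ℕ) : ℝ) = ((K.choose s * (K - s) : ℕ) : ℝ) := by
    exact_mod_cast congrArg (Nat.cast (R := ℝ)) this
  push_cast [Nat.cast_sub hsK] at this
  linarith [this]

lemma choose_pred_real (K s : ℕ) (hs : 1 ≤ s) (hK : 1 ≤ K) :
    (K : ℝ) * (((K - 1).choose (s - 1)) : ℝ) = (K.choose s : ℝ) * (s : ℝ) := by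
  have h := Nat.add_one_mul_choose_eq (K - 1) (s - 1)
  simp only [Nat.succ_eq_add_one, Nat.sub_add_cancel hK, Nat.sub_add_cancel hs] at h
  exact_mod_cast congrArg (Nat.cast (R := ℝ)) h

/-- The objective value of a two-level solution of the constraints simplifies to
`K - (K+1)(t + s1 s2)/((s1+1)(s2+1))`. -/
theorem two_level_objective (K s1 s2 : ℕ) (h1 : 1 ≤ s1) (h12 : s1 < s2) (h2K : s2 ≤ K)
    (t : ℝ) (ht0 : 0 < t) (htK : t < K)
    (x1 x2 : ℝ) (hx1 : 0 ≤ x1) (hx2 : 0 ≤ x2)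
    (hpart : (K.choose s1 : ℝ) * x1 + (K.choose s2 : ℝ) * x2 = 1)
    (hstor : ((K - 1).choose (s1 - 1) : ℝ) * x1 + ((K - 1).choose (s2 - 1) : ℝ) * x2 = t / K) :
    (K.choose (s1 + 1) : ℝ) * x1 + (K.choose (s2 + 1) : ℝ) * x2
      = (K : ℝ) - (K + 1) * (t + (s1 : ℝ) * (s2 : ℝ)) / (((s1 : ℝ) + 1) * ((s2 : ℝ) + 1)) := by
  have hK : 1 ≤ K := le_trans (le_trans h1 h12.le) h2K
  have hKR : (0 : ℝ) < K := by exact_mod_cast hK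
  have e1 := choose_succ_real K s1 (le_trans h12.le h2K)
  have e2 := choose_succ_real K s2 h2K
  have e3 := choose_pred_real K s1 h1 hK
  have e4 := choose_pred_real K s2 (le_trans h1 h12.le) hK
  -- second constraint multiplied by K
  have hstor' : (s1 : ℝ) * ((K.choose s1 : ℝ) * x1) + (s2 : ℝ) * ((K.choose s2 : ℝ) * x2) = t := by
    have := congrArg (fun y => (K : ℝ) * y) hstor
    field_simp at this
    nlinarith [this, e3, e4]
  have hs1 : ((s1 : ℝ) + 1) ≠ 0 := by positivity
  have hs2 : ((s2 : ℝ) + 1) ≠ 0 := by positivity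
  have key : ((K.choose (s1 + 1) : ℝ) * x1 + (K.choose (s2 + 1) : ℝ) * x2) * (((s1:ℝ)+1) * ((s2:ℝ)+1))
      = (K:ℝ) * (((s1:ℝ)+1) * ((s2:ℝ)+1)) - ((K:ℝ)+1) * (t + (s1:ℝ) * (s2:ℝ)) := by
    linear_combination (x1 * ((s2:ℝ)+1)) * e1 + (x2 * ((s1:ℝ)+1)) * e2
      + ((K:ℝ) * ((s1:ℝ) + (s2:ℝ) + 1) - (s1:ℝ) * (s2:ℝ)) * hpart - ((K:ℝ)+1) * hstor'
  field_simp
  linear_combination key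
end

section
/- Let K ≥ 1, 1 ≤ L ≤ K, x_s ≥ 0 for s = 0,...,K with ∑_{s=0}^K binom(K,s)x_s = 1, and ŝ = ⌊(K−L)/(L+1)⌋. Define y_0* = x_0 + ∑_{i=1}^{ŝ} binom(K,i)x_i, y_s* = 0 for 1 ≤ s ≤ ŝ, and y_s* = x_s for ŝ+1 ≤ s ≤ K. Then for every feasible y (meaning 0 ≤ y_s ≤ x_s for s ≥ 1, 0 ≤ y_0, and ∑_{s=0}^K binom(K,s)y_s = 1 with y_0 − x_0 = ∑_{s=1}^K binom(K,s)(x_s − y_s)), the rate L·y_0 + ∑_{s=1}^{K−1} binom(K,s+1)y_s is minimized at y = y*. -/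
open Finset

lemma coeff_nonneg_aux (K L s : ℕ) (hLK : L ≤ K) (hs : s ≤ (K - L) / (L + 1)) :
    L * K.choose s ≤ K.choose (s + 1) := by
  have h1 : s * (L + 1) ≤ K - L := (Nat.le_div_iff_mul_le (by omega)).mp hs
  have e1 : s * (L + 1) = L * s + s := by ring
  have h2 : L * (s + 1) ≤ K - s := by
    have e2 : L * (s + 1) = L * s + L := by ring
    omega
  have h3 : L * K.choose s * (s + 1) ≤ K.choose (s + 1) * (s + 1) := by
    rw [Nat.choose_succ_right_eq]
    calc L * K.choose s * (s + 1) = K.choose s * (L * (s + 1)) := by ring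
      _ ≤ K.choose s * (K - s) := Nat.mul_le_mul_left _ h2
  exact Nat.le_of_mul_le_mul_right h3 (by omega)

lemma coeff_nonpos_aux (K L s : ℕ) (hsK : s ≤ K) (hs : (K - L) / (L + 1) + 1 ≤ s) :
    K.choose (s + 1) ≤ L * K.choose s := by
  have h1 : K - L < s * (L + 1) := by
    have := (Nat.div_lt_iff_lt_mul (k := L + 1) (by omega)).mp (by omega : (K - L) / (L + 1) < s)
    omega
  have e1 : s * (L + 1) = L * s + s := by ring
  have h2 : K - s ≤ L * (s + 1) := by
    have e2 : L * (s + 1) = L * s + L := by ring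
    omega
  have h3 : K.choose (s + 1) * (s + 1) ≤ L * K.choose s * (s + 1) := by
    rw [Nat.choose_succ_right_eq]
    calc K.choose s * (K - s) ≤ K.choose s * (L * (s + 1)) := Nat.mul_le_mul_left _ h2
      _ = L * K.choose s * (s + 1) := by ring
  exact Nat.le_of_mul_le_mul_right h3 (by omega)

/-- Optimality of the simplified adaptive message selection (Proposition 2). -/
theorem simplified_adaptive_optimal (K L : ℕ) (hK : 1 ≤ K) (hL1 : 1 ≤ L) (hLK : L ≤ K)
    (x : ℕ → ℝ) (hx : ∀ s, 0 ≤ x s)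
    (hpart : ∑ s ∈ range (K + 1), (K.choose s : ℝ) * x s = 1)
    (ystar : ℕ → ℝ)
    (hy0 : ystar 0 = x 0 + ∑ i ∈ Icc 1 ((K - L) / (L + 1)), (K.choose i : ℝ) * x i)
    (hy1 : ∀ s, 1 ≤ s → s ≤ (K - L) / (L + 1) → ystar s = 0)
    (hy2 : ∀ s, (K - L) / (L + 1) + 1 ≤ s → s ≤ K → ystar s = x s) :
    ∀ y : ℕ → ℝ,
      (∀ s, 1 ≤ s → s ≤ K → 0 ≤ y s ∧ y s ≤ x s) →
      0 ≤ y 0 →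
      (∑ s ∈ range (K + 1), (K.choose s : ℝ) * y s = 1) →
      (y 0 - x 0 = ∑ s ∈ Icc 1 K, (K.choose s : ℝ) * (x s - y s)) →
      (L : ℝ) * ystar 0 + ∑ s ∈ Icc 1 (K - 1), (K.choose (s + 1) : ℝ) * ystar s
        ≤ (L : ℝ) * y 0 + ∑ s ∈ Icc 1 (K - 1), (K.choose (s + 1) : ℝ) * y s := by
  intro y hfeas hy0pos hysum hycon
  set S := (K - L) / (L + 1) with hS
  have hSK : S ≤ K := le_trans (Nat.div_le_self _ _) (Nat.sub_le _ _)
  -- extend sums from Icc 1 (K-1) to Icc 1 K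
  have ext : ∀ yy : ℕ → ℝ,
      ∑ s ∈ Icc 1 (K - 1), (K.choose (s + 1) : ℝ) * yy s
        = ∑ s ∈ Icc 1 K, (K.choose (s + 1) : ℝ) * yy s := by
    intro yy
    obtain ⟨m, rfl⟩ : ∃ m, K = m + 1 := ⟨K - 1, by omega⟩
    have hm : m + 1 - 1 = m := by omega
    rw [hm, Finset.sum_Icc_succ_top (by omega : 1 ≤ m + 1),
      Nat.choose_eq_zero_of_lt (by omega : m + 1 < m + 1 + 1)]
    push_cast
    ring
  -- key identity
  have key : ∀ (y0 : ℝ) (yy : ℕ → ℝ),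
      y0 = x 0 + ∑ s ∈ Icc 1 K, (K.choose s : ℝ) * (x s - yy s) →
      (L : ℝ) * y0 + ∑ s ∈ Icc 1 (K - 1), (K.choose (s + 1) : ℝ) * yy s
        = (L : ℝ) * x 0 + (L : ℝ) * ∑ s ∈ Icc 1 K, (K.choose s : ℝ) * x s
          + ∑ s ∈ Icc 1 K, ((K.choose (s + 1) : ℝ) - L * K.choose s) * yy s := by
    intro y0 yy h
    rw [ext yy, h, mul_add, Finset.mul_sum, Finset.mul_sum, add_assoc, add_assoc,
      ← Finset.sum_add_distrib, ← Finset.sum_add_distrib]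
    congr 1
    refine Finset.sum_congr rfl fun s _ => by ring
  -- ystar satisfies the constraint
  have hstarcon : ystar 0 = x 0 + ∑ s ∈ Icc 1 K, (K.choose s : ℝ) * (x s - ystar s) := by
    rw [hy0]
    congr 1
    rw [← Finset.sum_filter_add_sum_filter_not (Icc 1 K) (· ≤ S)]
    have hfil : (Icc 1 K).filter (· ≤ S) = Icc 1 S := by
      ext a; simp only [Finset.mem_filter, Finset.mem_Icc]; omega
    have h2 : ∑ s ∈ (Icc 1 K).filter (¬ · ≤ S), (K.choose s : ℝ) * (x s - ystar s) = 0 := by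
      refine Finset.sum_eq_zero fun s hs => ?_
      simp only [Finset.mem_filter, Finset.mem_Icc] at hs
      rw [hy2 s (by omega) (by omega)]
      ring
    rw [hfil, h2, add_zero]
    refine (Finset.sum_congr rfl fun s hs => ?_)
    simp only [Finset.mem_Icc] at hs
    rw [hy1 s hs.1 hs.2]
    ring
  rw [key (ystar 0) ystar hstarcon, key (y 0) y (by linarith [hycon])]
  have hmain : ∑ s ∈ Icc 1 K, ((K.choose (s + 1) : ℝ) - L * K.choose s) * ystar s
      ≤ ∑ s ∈ Icc 1 K, ((K.choose (s + 1) : ℝ) - L * K.choose s) * y s := by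
    refine Finset.sum_le_sum fun s hs => ?_
    simp only [Finset.mem_Icc] at hs
    by_cases hc : s ≤ S
    · rw [hy1 s hs.1 hc, mul_zero]
      have hcoef : (0 : ℝ) ≤ (K.choose (s + 1) : ℝ) - L * K.choose s := by
        have := coeff_nonneg_aux K L s hLK hc
        have : (L * K.choose s : ℝ) ≤ (K.choose (s + 1) : ℝ) := by exact_mod_cast this
        push_cast at this ⊢
        linarith
      exact mul_nonneg hcoef (hfeas s hs.1 hs.2).1
    · rw [hy2 s (by omega) hs.2]
      have hcoef : (K.choose (s + 1) : ℝ) - L * K.choose s ≤ 0 := by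
        have := coeff_nonpos_aux K L s hs.2 (by omega)
        have : (K.choose (s + 1) : ℝ) ≤ (L * K.choose s : ℝ) := by exact_mod_cast this
        push_cast at this ⊢
        linarith
      exact mul_le_mul_of_nonpos_left (hfeas s hs.1 hs.2).2 hcoef
  linarith
end

section
/- Let K ≥ 1 and t = KM/N be an integer with 0 ≤ t ≤ K. For any feasible placement (x_s ≥ 0 for 0 ≤ s ≤ K with ∑_{s=0}^K binom(K,s)x_s = 1 and ∑_{s=1}^K binom(K−1,s−1)x_s ≤ t/K), the peak rate ∑_{s=0}^{K−1} binom(K,s+1)x_s is at least (K−t)/(t+1), and equality is achieved by x_t = 1/binom(K,t), x_s = 0 for s ≠ t. -/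
open Finset

-- cast identity: (s+1) * C(K,s+1) = (K−s) * C(K,s) in ℝ, for s ≤ K
lemma choose_id_real (K s : ℕ) (hs : s ≤ K) :
    (K.choose (s+1) : ℝ) * ((s:ℝ) + 1) = (K.choose s : ℝ) * ((K:ℝ) - s) := by
  have h := Nat.choose_succ_right_eq K s
  have h' : ((K.choose (s+1) * (s+1) : ℕ) : ℝ) = ((K.choose s * (K - s) : ℕ) : ℝ) := by
    exact_mod_cast congrArg (Nat.cast : ℕ → ℝ) h
  push_cast [Nat.cast_sub hs] at h'
  linarith [h']

-- per-term dual bound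
lemma term_bound (K t s : ℕ) (hs : s ≤ K) :
    ((K:ℝ) - t) / ((t:ℝ) + 1) * (K.choose s : ℝ)
      - ((K:ℝ) + 1) / (((t:ℝ) + 1) * ((t:ℝ) + 2)) * ((s:ℝ) - t) * (K.choose s : ℝ)
      ≤ (K.choose (s+1) : ℝ) := by
  have hid := choose_id_real K s hs
  have hprod : (0:ℝ) ≤ ((s:ℝ) - t) * (((s:ℝ) - t) - 1) := by
    rcases le_or_gt s t with h | h
    · have h1 : (s:ℝ) ≤ t := by exact_mod_cast h
      nlinarith
    · have h1 : (t:ℝ) + 1 ≤ s := by exact_mod_cast h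
      nlinarith
  have hc : (0:ℝ) ≤ (K.choose s : ℝ) := Nat.cast_nonneg _
  have ht1 : (0:ℝ) < (t:ℝ) + 1 := by positivity
  have ht2 : (0:ℝ) < (t:ℝ) + 2 := by positivity
  have hs1 : (0:ℝ) < (s:ℝ) + 1 := by positivity
  rw [div_mul_eq_mul_div, div_mul_eq_mul_div, div_mul_eq_mul_div,
      div_sub_div _ _ (by positivity) (by positivity), div_le_iff₀ (by positivity)]
  have hid2 : (K.choose (s+1):ℝ) * (((s:ℝ)+1) * (((t:ℝ)+1)*((t:ℝ)+2)))
      = (K.choose s:ℝ) * ((K:ℝ)-s) * (((t:ℝ)+1)*((t:ℝ)+2)) := by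
    linear_combination (((t:ℝ)+1)*((t:ℝ)+2)) * hid
  nlinarith [hid2, mul_nonneg (mul_nonneg ht1.le hc) hprod, hs1]

/-- Proposition 1, integer case: every feasible placement has peak rate at least
`(K - t)/(t + 1)`, and the centralized placement achieves it. -/
theorem centralized_placement_optimal (K t : ℕ) (hK : 1 ≤ K) (ht : t ≤ K)
    (xstar : ℕ → ℝ) (hxs : ∀ s, xstar s = if s = t then 1 / (K.choose t : ℝ) else 0) :
    (∀ x : ℕ → ℝ, (∀ s, 0 ≤ x s) →
      (∑ s ∈ range (K + 1), (K.choose s : ℝ) * x s = 1) →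
      (∑ s ∈ Icc 1 K, ((K - 1).choose (s - 1) : ℝ) * x s ≤ (t : ℝ) / K) →
      ((K : ℝ) - t) / (t + 1) ≤ ∑ s ∈ range K, (K.choose (s + 1) : ℝ) * x s) ∧
    (∑ s ∈ range K, (K.choose (s + 1) : ℝ) * xstar s = ((K : ℝ) - t) / (t + 1)) := by
  constructor
  · intro x hx h1 h2
    set c : ℝ := ((K:ℝ) + 1) / (((t:ℝ) + 1) * ((t:ℝ) + 2)) with hc_def
    have hc : 0 ≤ c := by positivity
    -- extend the rate sum to range (K+1)
    have hsum0 : ∑ s ∈ range K, (K.choose (s + 1) : ℝ) * x s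
        = ∑ s ∈ range (K + 1), (K.choose (s + 1) : ℝ) * x s := by
      rw [Finset.sum_range_succ, Nat.choose_succ_self]
      simp
    -- storage constraint rewritten
    have hB : ∑ s ∈ range (K + 1), (s:ℝ) * (K.choose s : ℝ) * x s ≤ (t:ℝ) := by
      have hsplit : range (K + 1) = insert 0 (Icc 1 K) := by
        ext y; simp only [Finset.mem_range, Finset.mem_insert, Finset.mem_Icc]; omega
      rw [hsplit, Finset.sum_insert (by simp)]
      simp only [Nat.cast_zero, zero_mul, zero_add]
      have hcongr : ∀ s ∈ Icc 1 K, (s:ℝ) * (K.choose s : ℝ) * x s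
          = (K:ℝ) * (((K - 1).choose (s - 1) : ℝ) * x s) := by
        intro s hs
        simp only [Finset.mem_Icc] at hs
        have hnat : s * K.choose s = K * (K - 1).choose (s - 1) := by
          obtain ⟨s', rfl⟩ : ∃ s', s = s' + 1 := ⟨s - 1, by omega⟩
          obtain ⟨K', rfl⟩ : ∃ K', K = K' + 1 := ⟨K - 1, by omega⟩
          simpa [mul_comm] using (Nat.add_one_mul_choose_eq K' s').symm
        have : ((s * K.choose s : ℕ) : ℝ) = ((K * (K - 1).choose (s - 1) : ℕ) : ℝ) := by
          exact_mod_cast congrArg (Nat.cast : ℕ → ℝ) hnat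
        push_cast at this
        rw [this, mul_assoc]
      rw [Finset.sum_congr rfl hcongr, ← Finset.mul_sum]
      have hKpos : (0:ℝ) < K := by exact_mod_cast hK
      calc (K:ℝ) * ∑ s ∈ Icc 1 K, ((K - 1).choose (s - 1) : ℝ) * x s
          ≤ (K:ℝ) * ((t:ℝ) / K) := by
            exact mul_le_mul_of_nonneg_left h2 hKpos.le
        _ = (t:ℝ) := by field_simp
    -- per-term bound
    have hterm : ∀ s ∈ range (K + 1),
        ((K:ℝ) - t) / ((t:ℝ) + 1) * (K.choose s : ℝ) * x s
          - c * ((s:ℝ) - t) * (K.choose s : ℝ) * x s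
        ≤ (K.choose (s + 1) : ℝ) * x s := by
      intro s hs
      rw [Finset.mem_range] at hs
      have hb := term_bound K t s (by omega)
      have := mul_le_mul_of_nonneg_right hb (hx s)
      calc ((K:ℝ) - t) / ((t:ℝ) + 1) * (K.choose s : ℝ) * x s
            - c * ((s:ℝ) - t) * (K.choose s : ℝ) * x s
          = (((K:ℝ) - t) / ((t:ℝ) + 1) * (K.choose s : ℝ)
            - c * ((s:ℝ) - t) * (K.choose s : ℝ)) * x s := by ring
        _ ≤ (K.choose (s + 1) : ℝ) * x s := this
    have hsum := Finset.sum_le_sum hterm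
    -- expand the LHS sum
    have expand : ∑ s ∈ range (K + 1),
        (((K:ℝ) - t) / ((t:ℝ) + 1) * (K.choose s : ℝ) * x s
          - c * ((s:ℝ) - t) * (K.choose s : ℝ) * x s)
        = ((K:ℝ) - t) / ((t:ℝ) + 1)
          - c * ((∑ s ∈ range (K + 1), (s:ℝ) * (K.choose s : ℝ) * x s) - t) := by
      rw [Finset.sum_sub_distrib]
      have e1 : ∑ s ∈ range (K + 1), ((K:ℝ) - t) / ((t:ℝ) + 1) * (K.choose s : ℝ) * x s
          = ((K:ℝ) - t) / ((t:ℝ) + 1) := by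
        calc ∑ s ∈ range (K + 1), ((K:ℝ) - t) / ((t:ℝ) + 1) * (K.choose s : ℝ) * x s
            = ((K:ℝ) - t) / ((t:ℝ) + 1) * ∑ s ∈ range (K + 1), (K.choose s : ℝ) * x s := by
              rw [Finset.mul_sum]
              exact Finset.sum_congr rfl fun s _ => by ring
          _ = ((K:ℝ) - t) / ((t:ℝ) + 1) := by rw [h1, mul_one]
      have e2 : ∑ s ∈ range (K + 1), c * ((s:ℝ) - t) * (K.choose s : ℝ) * x s
          = c * ((∑ s ∈ range (K + 1), (s:ℝ) * (K.choose s : ℝ) * x s)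
              - t * ∑ s ∈ range (K + 1), (K.choose s : ℝ) * x s) := by
        calc ∑ s ∈ range (K + 1), c * ((s:ℝ) - t) * (K.choose s : ℝ) * x s
            = ∑ s ∈ range (K + 1), (c * ((s:ℝ) * (K.choose s : ℝ) * x s)
                - c * t * ((K.choose s : ℝ) * x s)) :=
              Finset.sum_congr rfl fun s _ => by ring
          _ = c * (∑ s ∈ range (K + 1), (s:ℝ) * (K.choose s : ℝ) * x s)
                - c * t * ∑ s ∈ range (K + 1), (K.choose s : ℝ) * x s := by
              rw [Finset.sum_sub_distrib, ← Finset.mul_sum, ← Finset.mul_sum]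
          _ = c * ((∑ s ∈ range (K + 1), (s:ℝ) * (K.choose s : ℝ) * x s)
              - t * ∑ s ∈ range (K + 1), (K.choose s : ℝ) * x s) := by ring
      rw [e1, e2, h1, mul_one]
    rw [expand] at hsum
    have hnp : c * ((∑ s ∈ range (K + 1), (s:ℝ) * (K.choose s : ℝ) * x s) - t) ≤ 0 :=
      mul_nonpos_of_nonneg_of_nonpos hc (by linarith)
    rw [hsum0]
    linarith
  · simp only [hxs, mul_ite, mul_zero]
    rw [Finset.sum_ite_eq' (range K) t]
    rcases lt_or_eq_of_le ht with h | h
    · rw [if_pos (Finset.mem_range.mpr h)]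
      have hid := choose_id_real K t ht
      have hne : (K.choose t : ℝ) ≠ 0 := by
        exact_mod_cast Nat.choose_pos ht |>.ne'
      field_simp
      linarith [hid]
    · subst h
      rw [if_neg (by simp)]
      rw [sub_self, zero_div]
end
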